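/- (q-Chu–Vandermonde summation) For 0<q<1, n a nonnegative integer, and complex x, y with (y;q)_n ≠ 0, ∑_{k=0}^n ((q^{-n};q)_k (x;q)_k / ((q;q)_k (y;q)_k)) q^k = x^n (y/x;q)_n / (y;q)_n, where for x = 0 the right-hand side is interpreted via x^n (y/x;q)_n = ∏_{j=0}^{n-1}(x - y q^j). -/

import Mathlib

open Finset

noncomputable def qPoch (q a : ℂ) (n : ℕ) : ℂ := ∏ k ∈ Finset.range n, (1 - a * q ^ k)

noncomputable def qPochInf (q a : ℂ) : ℂ := ∏' k : ℕ, (1 - a * q ^ k)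

noncomputable def cauchyP (q x y : ℂ) (n : ℕ) : ℂ := ∏ k ∈ Finset.range n, (x - q ^ k * y)

noncomputable def qBinom (q : ℂ) (n k : ℕ) : ℂ := qPoch q q n / (qPoch q q k * qPoch q q (n - k))

noncomputable def Dq (q : ℂ) (f : ℂ → ℂ) : ℂ → ℂ := fun a => (f a - f (q * a)) / a

noncomputable def thetaq (q : ℂ) (f : ℂ → ℂ) : ℂ → ℂ := fun a => (f (a / q) - f a) / (a / q)

noncomputable def qIntegral (q : ℂ) (f : ℂ → ℂ) (c d : ℂ) : ℂ :=
  (1 - q) * ∑' n : ℕ, q ^ n * (d * f (d * q ^ n) - c * f (c * q ^ n))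

/-!
Multiplying by `(y;q)_n = (y;q)_k (yq^k;q)_{n-k}` turns the identity into the polynomial identity
`∑_k c_{n,k} (x;q)_k (yq^k;q)_{n-k} = ∏_{j<n} (x - q^j y)` with `c_{n,k} = (q^{-n};q)_k q^k / (q;q)_k`.
This is proved by induction on `n`: peeling off the factor `x - y` of the right-hand side
replaces `y` by `qy`, and the q-Pascal recursion
`c_{n+1,k+1} = c_{n,k+1} / q^{k+1} - c_{n,k} / q^k` makes the difference of the two sides telescope.
-/

section

variable {q : ℂ}

@[simp]
lemma qPoch_zero (q a : ℂ) : qPoch q a 0 = 1 := by simp [qPoch]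

lemma qPoch_succ (q a : ℂ) (n : ℕ) : qPoch q a (n + 1) = qPoch q a n * (1 - a * q ^ n) := by
  simp [qPoch, prod_range_succ]

lemma qPoch_succ' (q a : ℂ) (n : ℕ) : qPoch q a (n + 1) = (1 - a) * qPoch q (a * q) n := by
  simp only [qPoch, prod_range_succ', pow_succ, pow_zero, mul_one, ← mul_assoc, mul_comm]

lemma qPoch_add (q a : ℂ) (m l : ℕ) :
    qPoch q a (m + l) = qPoch q a m * qPoch q (a * q ^ m) l := by
  simp only [qPoch, prod_range_add, pow_add, mul_assoc]

lemma cauchyP_succ' (q x y : ℂ) (n : ℕ) :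
    cauchyP q x y (n + 1) = (x - y) * cauchyP q x (q * y) n := by
  rw [cauchyP, prod_range_succ', mul_comm, pow_zero, one_mul]
  congr 1
  exact prod_congr rfl fun j _ => by ring

lemma qPoch_self_ne_zero (hq : ‖q‖ < 1) (k : ℕ) : qPoch q q k ≠ 0 := by
  refine prod_ne_zero_iff.mpr fun j _ => sub_ne_zero.mpr fun h => ?_
  have : ‖q ^ (j + 1)‖ < 1 := by
    rw [norm_pow]; exact pow_lt_one₀ (norm_nonneg q) hq j.succ_ne_zero
  rw [pow_succ', ← h, norm_one] at this
  exact this.false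

noncomputable def chuCoeff (q : ℂ) (n k : ℕ) : ℂ :=
  qPoch q (q ^ (-(n : ℤ))) k * q ^ k / qPoch q q k

@[simp]
lemma chuCoeff_zero_right (q : ℂ) (n : ℕ) : chuCoeff q n 0 = 1 := by
  simp [chuCoeff]

lemma chuCoeff_succ_self (hq : q ≠ 0) (n : ℕ) : chuCoeff q n (n + 1) = 0 := by
  have : 1 - q ^ (-(n : ℤ)) * q ^ n = 0 := by simp [zpow_neg, hq]
  rw [chuCoeff, qPoch_succ, this, mul_zero, zero_mul, zero_div]

lemma chuCoeff_succ_succ (hq : q ≠ 0) {k : ℕ} (hqq : qPoch q q (k + 1) ≠ 0) (n : ℕ) :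
    chuCoeff q (n + 1) (k + 1) = chuCoeff q n (k + 1) / q ^ (k + 1) - chuCoeff q n k / q ^ k := by
  have hshift : q ^ (-((n + 1 : ℕ) : ℤ)) = q ^ (-(n : ℤ)) / q := by
    rw [Nat.cast_succ, neg_add, zpow_add₀ hq, zpow_neg_one, div_eq_mul_inv]
  obtain ⟨-, hk⟩ := mul_ne_zero_iff.mp (qPoch_succ q q k ▸ hqq)
  simp only [chuCoeff, hshift, qPoch_succ' q (_ / q), div_mul_cancel₀ _ hq, qPoch_succ]
  field_simp
  ring

lemma sub_mul_qPoch_mul_qPoch (q x y : ℂ) (k m : ℕ) :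
    (x - y) * q ^ k * (qPoch q x k * qPoch q (y * q ^ (k + 1)) m) =
      qPoch q x k * qPoch q (y * q ^ k) (m + 1) - qPoch q x (k + 1) * qPoch q (y * q ^ (k + 1)) m := by
  rw [qPoch_succ' q (y * q ^ k), qPoch_succ, mul_assoc y, ← pow_succ]
  ring

lemma sum_chuCoeff_mul_qPoch_mul_qPoch (hq : q ≠ 0) (hqq : ∀ k, qPoch q q k ≠ 0) (x : ℂ)
    (n : ℕ) (y : ℂ) :
    ∑ k ∈ range (n + 1), chuCoeff q n k * qPoch q x k * qPoch q (y * q ^ k) (n - k) =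
      cauchyP q x y n := by
  induction n generalizing y with
  | zero => simp [cauchyP]
  | succ n ih =>
    set G : ℕ → ℂ := fun k => chuCoeff q n k / q ^ k * qPoch q x k * qPoch q (y * q ^ k) (n + 1 - k)
    set H : ℕ → ℂ := fun k =>
      chuCoeff q n k / q ^ k * qPoch q x (k + 1) * qPoch q (y * q ^ (k + 1)) (n - k)
    have hsucc (k : ℕ) : chuCoeff q (n + 1) (k + 1) * qPoch q x (k + 1) *
        qPoch q (y * q ^ (k + 1)) (n + 1 - (k + 1)) = G (k + 1) - H k := by
      simp only [G, H, chuCoeff_succ_succ hq (hqq _), Nat.add_sub_add_right]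
      ring
    have hstep (k : ℕ) (hk : k ∈ range (n + 1)) :
        (x - y) * (chuCoeff q n k * qPoch q x k * qPoch q (q * y * q ^ k) (n - k)) = G k - H k := by
      have hnk : n + 1 - k = n - k + 1 := by grind
      have hqy : q * y * q ^ k = y * q ^ (k + 1) := by ring
      simp only [G, H, hnk, hqy, mul_assoc, ← mul_sub, ← sub_mul_qPoch_mul_qPoch]
      field_simp
    calc ∑ k ∈ range (n + 1 + 1), chuCoeff q (n + 1) k * qPoch q x k * qPoch q (y * q ^ k) (n + 1 - k)
        = ∑ k ∈ range (n + 1), (G (k + 1) - H k) + G 0 := by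
          rw [sum_range_succ' _ (n + 1), sum_congr rfl fun k _ => hsucc k]
          simp [G]
      _ = ∑ k ∈ range (n + 1), G k - ∑ k ∈ range (n + 1), H k := by
          rw [sum_sub_distrib, sub_add_eq_add_sub, ← sum_range_succ', sum_range_succ]
          simp [G, chuCoeff_succ_self hq]
      _ = (x - y) * ∑ k ∈ range (n + 1),
            chuCoeff q n k * qPoch q x k * qPoch q (q * y * q ^ k) (n - k) := by
          rw [mul_sum, ← sum_sub_distrib, sum_congr rfl hstep]
      _ = cauchyP q x y (n + 1) := by rw [ih, cauchyP_succ']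

end

theorem q_chu_vandermonde (q : ℝ) (hq0 : 0 < q) (hq1 : q < 1) (n : ℕ) (x y : ℂ)
    (hy : qPoch (q : ℂ) y n ≠ 0) :
    ∑ k ∈ Finset.range (n + 1),
        qPoch (q : ℂ) ((q : ℂ) ^ (-(n : ℤ))) k * qPoch (q : ℂ) x k /
          (qPoch (q : ℂ) (q : ℂ) k * qPoch (q : ℂ) y k) * (q : ℂ) ^ k
      = cauchyP (q : ℂ) x y n / qPoch (q : ℂ) y n := by
  have hq : (q : ℂ) ≠ 0 := mod_cast hq0.ne'
  have hqq : ∀ k, qPoch (q : ℂ) q k ≠ 0 :=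
    qPoch_self_ne_zero (by rwa [Complex.norm_real, Real.norm_of_nonneg hq0.le])
  rw [← sum_chuCoeff_mul_qPoch_mul_qPoch hq hqq x n y, sum_div]
  refine sum_congr rfl fun k hk => ?_
  have hsplit : qPoch (q : ℂ) y n = qPoch (q : ℂ) y k * qPoch (q : ℂ) (y * q ^ k) (n - k) := by
    rw [← qPoch_add, Nat.add_sub_cancel' (by grind)]
  rw [hsplit] at hy ⊢
  rw [chuCoeff, mul_div_mul_right _ _ (right_ne_zero_of_mul hy)]
  ring
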